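/- Let μ, r ∈ ℝ, σ > 0, λ > 0, T > 0, β ∈ [0,∞), ε ∈ [0,1). For any bounded function f : [0,T]×ℝ → ℝ, define K_f(s,z) := (μ−r)h(z) + r − (σ²/2)h(z)² + λ·sup_{ζ∈ℝ}( f(s,ζ) − ln((1+β·h(ζ))/(1+β·h(z)))·1_{z<ζ} − ln((1−ε·h(ζ))/(1−ε·h(z)))·1_{z>ζ} ), where h(z) := e^z/(1+e^z). Then for every s ∈ [0,T] and all z, z' ∈ ℝ, |K_f(s,z') − K_f(s,z)| ≤ ( |μ−r| + σ² + λ·( β + ε/(1−ε) ) )·|z' − z|; that is, K_f is Lipschitz in its second variable, uniformly in s, with Lipschitz constant |μ−r| + σ² + λ(β + ε/(1−ε)). -/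

import Mathlib

open Set

/-- The logistic function `h(z) = e^z / (1 + e^z)`. -/
noncomputable def logistic (z : ℝ) : ℝ := Real.exp z / (1 + Real.exp z)

/-- The nonlinear term `K_f(s,z)` of the transformed HJB equation. -/
noncomputable def Knl (μ r σ lam β ε : ℝ) (f : ℝ → ℝ → ℝ) (s z : ℝ) : ℝ :=
  (μ - r) * logistic z + r - σ^2 / 2 * (logistic z)^2
    + lam * ⨆ ζ : ℝ, (f s ζ
        - Real.log ((1 + β * logistic ζ) / (1 + β * logistic z)) * (if z < ζ then 1 else 0)
        - Real.log ((1 - ε * logistic ζ) / (1 - ε * logistic z)) * (if ζ < z then 1 else 0))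

lemma one_add_exp_pos (z : ℝ) : 0 < 1 + Real.exp z := by positivity

lemma logistic_pos (z : ℝ) : 0 < logistic z :=
  div_pos (Real.exp_pos z) (one_add_exp_pos z)

lemma logistic_lt_one (z : ℝ) : logistic z < 1 := by
  rw [logistic, div_lt_one (one_add_exp_pos z)]
  linarith

lemma logistic_mono : Monotone logistic := by
  intro a b hab
  have ha := one_add_exp_pos a
  have hb := one_add_exp_pos b
  rw [logistic, logistic, div_le_div_iff₀ ha hb]
  have := Real.exp_le_exp.mpr hab
  nlinarith

lemma logistic_sub_le {z z' : ℝ} (h : z ≤ z') : logistic z' - logistic z ≤ z' - z := by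
  have ha := one_add_exp_pos z
  have hb := one_add_exp_pos z'
  have hez := Real.exp_pos z
  have hez' := Real.exp_pos z'
  -- exp z' - exp z ≤ (z' - z) * exp z'
  have key : Real.exp z' - Real.exp z ≤ (z' - z) * Real.exp z' := by
    have h1 := Real.add_one_le_exp (z - z')
    have h2 : Real.exp (z - z') * Real.exp z' = Real.exp z := by
      rw [← Real.exp_add]; ring_nf
    nlinarith
  rw [logistic, logistic, div_sub_div _ _ (ne_of_gt hb) (ne_of_gt ha),
    div_le_iff₀ (by positivity)]
  nlinarith [key, mul_nonneg (sub_nonneg.mpr h) hez'.le, mul_nonneg (sub_nonneg.mpr h) hez.le,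
    mul_nonneg (sub_nonneg.mpr h) (mul_pos hez hez').le, sub_nonneg.mpr h]

lemma logistic_lipschitz (z z' : ℝ) : |logistic z' - logistic z| ≤ |z' - z| := by
  rcases le_total z z' with h | h
  · rw [abs_of_nonneg (by linarith [logistic_mono h]), abs_of_nonneg (by linarith)]
    exact logistic_sub_le h
  · rw [abs_of_nonpos (by linarith [logistic_mono h]), abs_of_nonpos (by linarith)]
    linarith [logistic_sub_le h]

lemma log_sub_log_le {a b m : ℝ} (hm : 0 < m) (ha : m ≤ a) (hb : m ≤ b) :
    Real.log a - Real.log b ≤ |a - b| / m := by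
  have ha0 : 0 < a := lt_of_lt_of_le hm ha
  have hb0 : 0 < b := lt_of_lt_of_le hm hb
  rcases le_total a b with h | h
  · have h1 : Real.log a ≤ Real.log b := Real.log_le_log ha0 h
    have h2 : (0:ℝ) ≤ |a - b| / m := by positivity
    linarith
  · have h1 := Real.log_le_sub_one_of_pos (show (0:ℝ) < a / b by positivity)
    rw [Real.log_div (ne_of_gt ha0) (ne_of_gt hb0)] at h1
    have h2 : a / b - 1 = (a - b) / b := by field_simp
    have h3 : (a - b) / b ≤ (a - b) / m := by
      apply div_le_div_of_nonneg_left (by linarith) hm hb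
    have h4 : |a - b| = a - b := abs_of_nonneg (by linarith)
    rw [h4]
    linarith

lemma abs_log_sub_log_le {a b m : ℝ} (hm : 0 < m) (ha : m ≤ a) (hb : m ≤ b) :
    |Real.log a - Real.log b| ≤ |a - b| / m := by
  rw [abs_sub_le_iff]
  constructor
  · exact log_sub_log_le hm ha hb
  · rw [abs_sub_comm]; exact log_sub_log_le hm hb ha

section aux

variable {β ε : ℝ}

/-- `A(z) = log(1 + β h(z))`. -/
noncomputable def Afun (β z : ℝ) : ℝ := Real.log (1 + β * logistic z)

/-- `B(z) = log(1 - ε h(z))`. -/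
noncomputable def Bfun (ε z : ℝ) : ℝ := Real.log (1 - ε * logistic z)

lemma one_le_one_add (hβ : 0 ≤ β) (z : ℝ) : 1 ≤ 1 + β * logistic z := by
  nlinarith [logistic_pos z]

lemma one_sub_eps_le (hε0 : 0 ≤ ε) (hε1 : ε < 1) (z : ℝ) : 1 - ε ≤ 1 - ε * logistic z := by
  nlinarith [logistic_pos z, logistic_lt_one z]

lemma Afun_lipschitz (hβ : 0 ≤ β) (z z' : ℝ) :
    |Afun β z' - Afun β z| ≤ β * |z' - z| := by
  have h := abs_log_sub_log_le one_pos (one_le_one_add hβ z') (one_le_one_add hβ z)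
  rw [div_one] at h
  calc |Afun β z' - Afun β z| ≤ |(1 + β * logistic z') - (1 + β * logistic z)| := h
    _ = β * |logistic z' - logistic z| := by
        rw [show (1 + β * logistic z') - (1 + β * logistic z)
          = β * (logistic z' - logistic z) by ring, abs_mul, abs_of_nonneg hβ]
    _ ≤ β * |z' - z| := by
        exact mul_le_mul_of_nonneg_left (logistic_lipschitz z z') hβ

lemma Bfun_lipschitz (hε0 : 0 ≤ ε) (hε1 : ε < 1) (z z' : ℝ) :
    |Bfun ε z' - Bfun ε z| ≤ ε / (1 - ε) * |z' - z| := by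
  have hm : (0:ℝ) < 1 - ε := by linarith
  have h := abs_log_sub_log_le hm (one_sub_eps_le hε0 hε1 z') (one_sub_eps_le hε0 hε1 z)
  calc |Bfun ε z' - Bfun ε z|
      ≤ |(1 - ε * logistic z') - (1 - ε * logistic z)| / (1 - ε) := h
    _ = ε * |logistic z' - logistic z| / (1 - ε) := by
        rw [show (1 - ε * logistic z') - (1 - ε * logistic z)
          = ε * (logistic z - logistic z') by ring, abs_mul, abs_of_nonneg hε0,
          abs_sub_comm]
    _ ≤ ε / (1 - ε) * |z' - z| := by
        rw [div_mul_eq_mul_div]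
        gcongr (ε * ?_) / (1 - ε)
        exact logistic_lipschitz z z'

lemma Afun_mono (hβ : 0 ≤ β) : Monotone (Afun β) := by
  intro a b hab
  apply Real.log_le_log (by linarith [one_le_one_add hβ a])
  nlinarith [logistic_mono hab]

lemma Bfun_anti (hε0 : 0 ≤ ε) (hε1 : ε < 1) : Antitone (Bfun ε) := by
  intro a b hab
  apply Real.log_le_log
  · nlinarith [logistic_pos b, logistic_lt_one b]
  · nlinarith [logistic_mono hab]

end aux

/-- The penalty function. -/
noncomputable def Pen (β ε z ζ : ℝ) : ℝ :=
  max (Afun β ζ - Afun β z) 0 + max (Bfun ε ζ - Bfun ε z) 0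

lemma Pen_nonneg (β ε z ζ : ℝ) : 0 ≤ Pen β ε z ζ := by
  unfold Pen
  have := le_max_right (Afun β ζ - Afun β z) 0
  have := le_max_right (Bfun ε ζ - Bfun ε z) 0
  linarith

lemma integrand_eq (β ε : ℝ) (hβ : 0 ≤ β) (hε0 : 0 ≤ ε) (hε1 : ε < 1)
    (F : ℝ → ℝ) (z ζ : ℝ) :
    F ζ - Real.log ((1 + β * logistic ζ) / (1 + β * logistic z)) * (if z < ζ then 1 else 0)
        - Real.log ((1 - ε * logistic ζ) / (1 - ε * logistic z)) * (if ζ < z then 1 else 0)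
      = F ζ - Pen β ε z ζ := by
  have hA1 : (0:ℝ) < 1 + β * logistic ζ := by linarith [one_le_one_add hβ ζ]
  have hA2 : (0:ℝ) < 1 + β * logistic z := by linarith [one_le_one_add hβ z]
  have hB1 : (0:ℝ) < 1 - ε * logistic ζ := by linarith [one_sub_eps_le hε0 hε1 ζ]
  have hB2 : (0:ℝ) < 1 - ε * logistic z := by linarith [one_sub_eps_le hε0 hε1 z]
  rw [Real.log_div (ne_of_gt hA1) (ne_of_gt hA2),
    Real.log_div (ne_of_gt hB1) (ne_of_gt hB2)]
  rcases lt_trichotomy z ζ with h | h | h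
  · have h1 : Afun β z ≤ Afun β ζ := Afun_mono hβ h.le
    have h2 : Bfun ε ζ ≤ Bfun ε z := Bfun_anti hε0 hε1 h.le
    simp only [if_pos h, if_neg (not_lt.mpr h.le), Pen,
      max_eq_left (by linarith : (0:ℝ) ≤ Afun β ζ - Afun β z),
      max_eq_right (by linarith : Bfun ε ζ - Bfun ε z ≤ 0)]
    simp only [Afun, Bfun]
    ring
  · subst h
    simp [Pen, Afun, Bfun]
  · have h1 : Afun β ζ ≤ Afun β z := Afun_mono hβ h.le
    have h2 : Bfun ε z ≤ Bfun ε ζ := Bfun_anti hε0 hε1 h.le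
    simp only [if_neg (not_lt.mpr h.le), if_pos h, Pen,
      max_eq_right (by linarith : Afun β ζ - Afun β z ≤ 0),
      max_eq_left (by linarith : (0:ℝ) ≤ Bfun ε ζ - Bfun ε z)]
    simp only [Afun, Bfun]
    ring

lemma Pen_lipschitz (β ε : ℝ) (hβ : 0 ≤ β) (hε0 : 0 ≤ ε) (hε1 : ε < 1) (z z' ζ : ℝ) :
    |Pen β ε z' ζ - Pen β ε z ζ| ≤ (β + ε / (1 - ε)) * |z' - z| := by
  have hA : |max (Afun β ζ - Afun β z') 0 - max (Afun β ζ - Afun β z) 0|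
      ≤ β * |z' - z| := by
    calc |max (Afun β ζ - Afun β z') 0 - max (Afun β ζ - Afun β z) 0|
        ≤ |(Afun β ζ - Afun β z') - (Afun β ζ - Afun β z)| :=
          abs_max_sub_max_le_abs _ _ _
      _ = |Afun β z' - Afun β z| := by rw [abs_sub_comm]; ring_nf
      _ ≤ β * |z' - z| := Afun_lipschitz hβ z z'
  have hB : |max (Bfun ε ζ - Bfun ε z') 0 - max (Bfun ε ζ - Bfun ε z) 0|
      ≤ ε / (1 - ε) * |z' - z| := by
    calc |max (Bfun ε ζ - Bfun ε z') 0 - max (Bfun ε ζ - Bfun ε z) 0|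
        ≤ |(Bfun ε ζ - Bfun ε z') - (Bfun ε ζ - Bfun ε z)| :=
          abs_max_sub_max_le_abs _ _ _
      _ = |Bfun ε z' - Bfun ε z| := by rw [abs_sub_comm]; ring_nf
      _ ≤ ε / (1 - ε) * |z' - z| := Bfun_lipschitz hε0 hε1 z z'
  unfold Pen
  calc |(max (Afun β ζ - Afun β z') 0 + max (Bfun ε ζ - Bfun ε z') 0)
      - (max (Afun β ζ - Afun β z) 0 + max (Bfun ε ζ - Bfun ε z) 0)|
      ≤ |max (Afun β ζ - Afun β z') 0 - max (Afun β ζ - Afun β z) 0|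
        + |max (Bfun ε ζ - Bfun ε z') 0 - max (Bfun ε ζ - Bfun ε z) 0| := by
        rw [show (max (Afun β ζ - Afun β z') 0 + max (Bfun ε ζ - Bfun ε z') 0)
          - (max (Afun β ζ - Afun β z) 0 + max (Bfun ε ζ - Bfun ε z) 0)
          = (max (Afun β ζ - Afun β z') 0 - max (Afun β ζ - Afun β z) 0)
            + (max (Bfun ε ζ - Bfun ε z') 0 - max (Bfun ε ζ - Bfun ε z) 0) by ring]
        exact abs_add_le _ _
    _ ≤ (β + ε / (1 - ε)) * |z' - z| := by linarith [hA, hB]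

lemma ciSup_sub_le {g1 g2 : ℝ → ℝ} (bdd2 : BddAbove (range g2)) {c : ℝ}
    (h : ∀ ζ, g1 ζ ≤ g2 ζ + c) : (⨆ ζ, g1 ζ) ≤ (⨆ ζ, g2 ζ) + c :=
  ciSup_le fun ζ => (h ζ).trans (add_le_add_left (le_ciSup bdd2 ζ) c)

/-- For any bounded `f`, the map `z ↦ K_f(s,z)` is Lipschitz, uniformly in `s ∈ [0,T]`,
with Lipschitz constant `|μ-r| + σ² + λ(β + ε/(1-ε))`. -/
theorem Knl_lipschitz (μ r σ lam T β ε : ℝ)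
    (hσ : 0 < σ) (hlam : 0 < lam) (hT : 0 < T)
    (hβ : 0 ≤ β) (hε0 : 0 ≤ ε) (hε1 : ε < 1)
    (f : ℝ → ℝ → ℝ) (hf : ∃ C : ℝ, ∀ s z : ℝ, |f s z| ≤ C) :
    ∀ s ∈ Icc (0:ℝ) T, ∀ z z' : ℝ,
      |Knl μ r σ lam β ε f s z' - Knl μ r σ lam β ε f s z|
        ≤ (|μ - r| + σ^2 + lam * (β + ε / (1 - ε))) * |z' - z| := by
  obtain ⟨C, hC⟩ := hf
  intro s _ z z'
  -- rewrite the sup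
  have hrw : ∀ w : ℝ, Knl μ r σ lam β ε f s w
      = (μ - r) * logistic w + r - σ^2 / 2 * (logistic w)^2
        + lam * ⨆ ζ : ℝ, (f s ζ - Pen β ε w ζ) := by
    intro w
    unfold Knl
    congr 2
    exact iSup_congr fun ζ => integrand_eq β ε hβ hε0 hε1 (f s) w ζ
  have bdd : ∀ w : ℝ, BddAbove (range fun ζ => f s ζ - Pen β ε w ζ) := by
    intro w
    refine ⟨C, ?_⟩
    rintro x ⟨ζ, rfl⟩
    have := Pen_nonneg β ε w ζ
    have := (abs_le.mp (hC s ζ)).2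
    dsimp only
    linarith
  -- sup difference bound
  have hS : ∀ w w' : ℝ,
      (⨆ ζ : ℝ, (f s ζ - Pen β ε w' ζ)) - (⨆ ζ : ℝ, (f s ζ - Pen β ε w ζ))
        ≤ (β + ε / (1 - ε)) * |w' - w| := by
    intro w w'
    have h1 : (⨆ ζ : ℝ, (f s ζ - Pen β ε w' ζ))
        ≤ (⨆ ζ : ℝ, (f s ζ - Pen β ε w ζ)) + (β + ε / (1 - ε)) * |w' - w| := by
      apply ciSup_sub_le (bdd w)
      intro ζ
      have := Pen_lipschitz β ε hβ hε0 hε1 w w' ζ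
      have h2 := (abs_le.mp this).1
      linarith
    linarith
  have hSd : |(⨆ ζ : ℝ, (f s ζ - Pen β ε z' ζ)) - (⨆ ζ : ℝ, (f s ζ - Pen β ε z ζ))|
      ≤ (β + ε / (1 - ε)) * |z' - z| := by
    rw [abs_sub_le_iff]
    constructor
    · exact hS z z'
    · have := hS z' z
      rwa [abs_sub_comm] at this
  rw [hrw z, hrw z']
  set S1 := ⨆ ζ : ℝ, (f s ζ - Pen β ε z' ζ)
  set S2 := ⨆ ζ : ℝ, (f s ζ - Pen β ε z ζ)
  have hld : |logistic z' - logistic z| ≤ |z' - z| := logistic_lipschitz z z'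
  have hsq : |(logistic z')^2 - (logistic z)^2| ≤ 2 * |z' - z| := by
    have h1 := logistic_pos z
    have h2 := logistic_pos z'
    have h3 := logistic_lt_one z
    have h4 := logistic_lt_one z'
    calc |(logistic z')^2 - (logistic z)^2|
        = |logistic z' + logistic z| * |logistic z' - logistic z| := by
          rw [← abs_mul]; ring_nf
      _ ≤ 2 * |z' - z| := by
          apply mul_le_mul
          · rw [abs_of_nonneg (by linarith)]; linarith
          · exact hld
          · positivity
          · norm_num
  have key : (μ - r) * logistic z' + r - σ^2 / 2 * (logistic z')^2 + lam * S1
      - ((μ - r) * logistic z + r - σ^2 / 2 * (logistic z)^2 + lam * S2)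
      = (μ - r) * (logistic z' - logistic z)
        - σ^2 / 2 * ((logistic z')^2 - (logistic z)^2) + lam * (S1 - S2) := by ring
  rw [key]
  have t1 : |(μ - r) * (logistic z' - logistic z)| ≤ |μ - r| * |z' - z| := by
    rw [abs_mul]
    exact mul_le_mul_of_nonneg_left hld (abs_nonneg _)
  have t2 : |σ^2 / 2 * ((logistic z')^2 - (logistic z)^2)| ≤ σ^2 * |z' - z| := by
    rw [abs_mul, abs_of_nonneg (show (0:ℝ) ≤ σ^2/2 by positivity)]
    nlinarith [hsq, abs_nonneg ((logistic z')^2 - (logistic z)^2), sq_nonneg σ]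
  have t3 : |lam * (S1 - S2)| ≤ lam * (β + ε / (1 - ε)) * |z' - z| := by
    rw [abs_mul, abs_of_nonneg hlam.le, mul_assoc]
    exact mul_le_mul_of_nonneg_left hSd hlam.le
  calc |(μ - r) * (logistic z' - logistic z)
        - σ^2 / 2 * ((logistic z')^2 - (logistic z)^2) + lam * (S1 - S2)|
      ≤ |(μ - r) * (logistic z' - logistic z)|
        + |σ^2 / 2 * ((logistic z')^2 - (logistic z)^2)| + |lam * (S1 - S2)| := by
        apply (abs_add_le _ _).trans
        apply add_le_add_left
        exact abs_sub _ _
    _ ≤ (|μ - r| + σ^2 + lam * (β + ε / (1 - ε))) * |z' - z| := by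
        rw [add_mul, add_mul]
        exact add_le_add (add_le_add t1 t2) t3
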